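/- arXiv:1205.0873 — 4 statements merged into one kernel-verified Lean document; each statement's English description precedes it below -/
import Mathlib

section
/- Let X be a geodesic ptolemaic metric space. Then every local geodesic in X is globally minimizing: if c : [a,b] → X and there is λ ≥ 0 such that every t ∈ [a,b] has a neighborhood I' ⊆ [a,b] on which d(c(s),c(s')) = λ|s−s'| for all s,s' ∈ I', then d(c(s),c(s')) = λ|s−s'| for all s,s' ∈ [a,b]. -/
open Metric Set Filter Topology

/-- A metric space is ptolemaic if all quadruples satisfy the Ptolemy inequality. -/
def Ptolemaic (X : Type*) [MetricSpace X] : Prop :=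
  ∀ x y z w : X, dist x y * dist z w ≤ dist x z * dist y w + dist x w * dist y z

/-- A metric space is geodesic if every pair of points is joined by a geodesic. -/
def GeodesicMetricSpace (X : Type*) [MetricSpace X] : Prop :=
  ∀ x y : X, ∃ c : ℝ → X, c 0 = x ∧ c 1 = y ∧
    ∀ s ∈ Set.Icc (0:ℝ) 1, ∀ t ∈ Set.Icc (0:ℝ) 1,
      dist (c s) (c t) = dist x y * |s - t|

/-!
Let `x, y, z, w` have the pairwise distances of the points `t₀ ≤ t₁ < t₂ ≤ t₃` of a line scaled by
`l`, except possibly `d(x, w)`. Since `(t₂ - t₀)(t₃ - t₁) - (t₁ - t₀)(t₃ - t₂) = (t₂ - t₁)(t₃ - t₀)`,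
Ptolemy's inequality for `x, z, y, w` gives `d(x, w) ≥ l (t₃ - t₀)`, and the triangle inequality
the reverse. Hence two geodesic pieces of a curve that overlap in an interval of positive length
glue to a geodesic. By the Lebesgue number lemma a local geodesic on `[a, b]` is geodesic on all
subintervals of some fixed length `δ`, and gluing such pieces sweeps out `[a, b]`.
-/

section

variable {X : Type*}

def IsGeodesicOn [PseudoMetricSpace X] (c : ℝ → X) (l : ℝ) (S : Set ℝ) : Prop :=
  ∀ s ∈ S, ∀ s' ∈ S, dist (c s) (c s') = l * |s - s'|

namespace IsGeodesicOn

variable [PseudoMetricSpace X] {c : ℝ → X} {l : ℝ} {S T : Set ℝ}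

theorem mono (h : IsGeodesicOn c l T) (hST : S ⊆ T) : IsGeodesicOn c l S :=
  fun s hs s' hs' => h s (hST hs) s' (hST hs')

theorem of_forall_le (h : ∀ s ∈ S, ∀ s' ∈ S, s ≤ s' → dist (c s) (c s') = l * (s' - s)) :
    IsGeodesicOn c l S := by
  intro s hs s' hs'
  rcases le_total s s' with hss' | hs's
  · rw [h s hs s' hs' hss', abs_of_nonpos (sub_nonpos.2 hss'), neg_sub]
  · rw [dist_comm, h s' hs' s hs hs's, abs_of_nonneg (sub_nonneg.2 hs's)]

theorem dist_eq_of_le (h : IsGeodesicOn c l S) {s s' : ℝ} (hs : s ∈ S) (hs' : s' ∈ S)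
    (hss' : s ≤ s') : dist (c s) (c s') = l * (s' - s) := by
  rw [h s hs s' hs', abs_of_nonpos (sub_nonpos.2 hss'), neg_sub]

end IsGeodesicOn

theorem Ptolemaic.dist_eq_of_dist_eq_mul_sub [MetricSpace X] (hX : Ptolemaic X) {x y z w : X}
    {l t₀ t₁ t₂ t₃ : ℝ} (hl : 0 ≤ l) (h₁₂ : t₁ < t₂) (hxy : dist x y = l * (t₁ - t₀))
    (hxz : dist x z = l * (t₂ - t₀)) (hyz : dist y z = l * (t₂ - t₁))
    (hzw : dist z w = l * (t₃ - t₂)) (hyw : dist y w = l * (t₃ - t₁)) :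
    dist x w = l * (t₃ - t₀) := by
  have upper : dist x w ≤ l * (t₃ - t₀) := by
    calc dist x w ≤ dist x z + dist z w := dist_triangle x z w
      _ = l * (t₃ - t₀) := by rw [hxz, hzw]; ring
  have lower : l * (t₃ - t₀) ≤ dist x w := by
    rcases hl.eq_or_lt with rfl | hl
    · simp
    have ptolemy := hX x z y w
    rw [hxz, hyw, hxy, hzw, dist_comm z y, hyz] at ptolemy
    have : (l * (t₂ - t₁)) * (l * (t₃ - t₀)) ≤ (l * (t₂ - t₁)) * dist x w := by nlinarith
    exact le_of_mul_le_mul_left this (mul_pos hl (sub_pos.2 h₁₂))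
  exact upper.antisymm lower

theorem IsGeodesicOn.Icc_union_Icc [MetricSpace X] (hX : Ptolemaic X) {c : ℝ → X} {l p q r w : ℝ}
    (hl : 0 ≤ l) (hqr : q < r) (hpr : IsGeodesicOn c l (Icc p r))
    (hqw : IsGeodesicOn c l (Icc q w)) : IsGeodesicOn c l (Icc p w) := by
  refine IsGeodesicOn.of_forall_le fun s hs s' hs' hss' => ?_
  by_cases hs'r : s' ≤ r
  · exact hpr.dist_eq_of_le ⟨hs.1, hss'.trans hs'r⟩ ⟨hs.1.trans hss', hs'r⟩ hss'
  by_cases hqs : q ≤ s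
  · exact hqw.dist_eq_of_le ⟨hqs, hss'.trans hs'.2⟩ ⟨hqs.trans hss', hs'.2⟩ hss'
  push Not at hs'r hqs
  have hs_pr : s ∈ Icc p r := ⟨hs.1, hqs.le.trans hqr.le⟩
  have hq_pr : q ∈ Icc p r := ⟨hs.1.trans hqs.le, hqr.le⟩
  have hr_pr : r ∈ Icc p r := ⟨hq_pr.1.trans hqr.le, le_rfl⟩
  have hq_qw : q ∈ Icc q w := ⟨le_rfl, hqr.le.trans (hs'r.le.trans hs'.2)⟩
  have hr_qw : r ∈ Icc q w := ⟨hqr.le, hs'r.le.trans hs'.2⟩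
  have hs'_qw : s' ∈ Icc q w := ⟨hqr.le.trans hs'r.le, hs'.2⟩
  exact hX.dist_eq_of_dist_eq_mul_sub hl hqr (hpr.dist_eq_of_le hs_pr hq_pr hqs.le)
    (hpr.dist_eq_of_le hs_pr hr_pr (hqs.le.trans hqr.le)) (hpr.dist_eq_of_le hq_pr hr_pr hqr.le)
    (hqw.dist_eq_of_le hr_qw hs'_qw hs'r.le) (hqw.dist_eq_of_le hq_qw hs'_qw (hqr.le.trans hs'r.le))

theorem exists_pos_forall_isGeodesicOn_Icc [PseudoMetricSpace X] {c : ℝ → X} {l a b : ℝ}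
    (h : ∀ t ∈ Icc a b, ∃ U ∈ 𝓝 t, IsGeodesicOn c l (Icc a b ∩ U)) :
    ∃ δ > 0, ∀ p q, a ≤ p → q ≤ b → q - p < δ → IsGeodesicOn c l (Icc p q) := by
  choose U hU hcU using h
  obtain ⟨δ, hδ, hball⟩ := uniformity_basis_dist.lebesgue_number_lemma_nhds' isCompact_Icc hU
  refine ⟨δ, hδ, fun p q hap hqb hpq => ?_⟩
  rcases lt_or_ge q p with hqp | hpq'
  · rw [Icc_eq_empty_of_lt hqp]
    exact fun s hs => hs.elim
  obtain ⟨t, ht⟩ := hball p ⟨hap, hpq'.trans hqb⟩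
  refine (hcU t t.2).mono fun s hs => ⟨⟨hap.trans hs.1, hs.2.trans hqb⟩, ht ?_⟩
  change dist p s < δ
  rw [Real.dist_eq, abs_of_nonpos (by linarith [hs.1])]
  linarith [hs.2]

theorem Ptolemaic.isGeodesicOn_Icc_of_forall_sub_lt [MetricSpace X] (hX : Ptolemaic X)
    {c : ℝ → X} {l a b δ : ℝ} (hl : 0 ≤ l) (hδ : 0 < δ)
    (h : ∀ p q, a ≤ p → q ≤ b → q - p < δ → IsGeodesicOn c l (Icc p q)) :
    IsGeodesicOn c l (Icc a b) := by
  have sweep : ∀ n : ℕ, ∀ x ≤ b, x ≤ a + n * (δ / 3) → IsGeodesicOn c l (Icc a x) := by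
    intro n
    induction n with
    | zero =>
      intro x hxb hx
      exact h a x le_rfl hxb (by simp only [CharP.cast_eq_zero, zero_mul, add_zero] at hx; linarith)
    | succ n ih =>
      intro x hxb hx
      rcases lt_or_ge (x - a) δ with hxa | hxa
      · exact h a x le_rfl hxb hxa
      have hx' : x - δ / 3 ≤ a + n * (δ / 3) := by push_cast at hx; linarith
      exact (ih _ (by linarith) hx').Icc_union_Icc hX hl (by linarith)
        (h (x - 2 * δ / 3) x (by linarith) hxb (by linarith))
  obtain ⟨n, hn⟩ := exists_nat_ge ((b - a) / (δ / 3))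
  exact sweep n b le_rfl (by rw [div_le_iff₀ (by positivity)] at hn; linarith)

end

theorem local_geodesic_globally_minimizing_ptolemaic_general (X : Type*) [MetricSpace X]
    (hPT : Ptolemaic X)
    (a b : ℝ) (c : ℝ → X) (l : ℝ) (hl : 0 ≤ l)
    (hloc : ∀ t ∈ Set.Icc a b, ∃ ε > (0:ℝ),
      ∀ s ∈ Set.Icc a b ∩ Set.Ioo (t - ε) (t + ε),
      ∀ s' ∈ Set.Icc a b ∩ Set.Ioo (t - ε) (t + ε),
        dist (c s) (c s') = l * |s - s'|) :
    ∀ s ∈ Set.Icc a b, ∀ s' ∈ Set.Icc a b, dist (c s) (c s') = l * |s - s'| := by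
  obtain ⟨δ, hδ, hshort⟩ := exists_pos_forall_isGeodesicOn_Icc fun t ht => by
    obtain ⟨ε, hε, hnear⟩ := hloc t ht
    exact ⟨_, Ioo_mem_nhds (by linarith) (by linarith), hnear⟩
  exact hPT.isGeodesicOn_Icc_of_forall_sub_lt hl hδ hshort

/-- **In a geodesic PT space every local geodesic is globally minimizing.** -/
theorem local_geodesic_globally_minimizing_ptolemaic (X : Type*) [MetricSpace X]
    (hPT : Ptolemaic X) (hgeo : GeodesicMetricSpace X)
    (a b : ℝ) (hab : a ≤ b) (c : ℝ → X) (l : ℝ) (hl : 0 ≤ l)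
    (hloc : ∀ t ∈ Set.Icc a b, ∃ ε > (0:ℝ),
      ∀ s ∈ Set.Icc a b ∩ Set.Ioo (t - ε) (t + ε),
      ∀ s' ∈ Set.Icc a b ∩ Set.Ioo (t - ε) (t + ε),
        dist (c s) (c s') = l * |s - s'|) :
    ∀ s ∈ Set.Icc a b, ∀ s' ∈ Set.Icc a b, dist (c s) (c s') = l * |s - s'| :=
  local_geodesic_globally_minimizing_ptolemaic_general X hPT a b c l hl hloc
end

section
/- Let X be a ptolemaic metric space and let c₁, c₂ : ℝ → X be parallel geodesic lines. Then there exists s₀ ∈ ℝ such that the reparametrized line c₂'(t) = c₂(t + s₀) satisfies b_{c₂'}⁺ = b_{c₁}⁺ and b_{c₂'}⁻ = b_{c₁}⁻, where b^± denote the Busemann functions of the forward and backward rays of the respective lines. -/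
/-!
In a ptolemaic space the distance to a point is convex along geodesics (Ptolemy's inequality for
`d u, d v, d w, x` is the three-slope inequality), hence so is the Busemann function `b` of `c₁`
along `c₂`. Since `b (c₂ u) + u ≤ d(c₁ u, c₂ u) = o(|u|)` in both directions, the convex function
`u ↦ b (c₂ u) + u` is constant. With the Busemann function `b'` of `c₂` this and the 1-Lipschitz
property give `b ≤ b' + b (c₂ 0)` and `b' ≤ b + b' (c₁ 0)`, while Ptolemy's inequality for
`c₂ 0, c₁ t, c₂ t, c₁ 0` as `t → ∞` gives `b (c₂ 0) + b' (c₁ 0) ≤ 0`; hence `b' = b - b (c₂ 0)`, and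
shifting `c₂` by `s₀ = b₁⁺ (c₂ 0)` matches the forward functions. For the backward ones,
`b⁺ + b⁻ ≥ 0` with equality on the line forces the two shifts to agree.
-/
open Metric Set Filter Topology

/-- A unit-speed geodesic line: an isometric embedding of ℝ. -/
def IsGeodesicLine {X : Type*} [MetricSpace X] (c : ℝ → X) : Prop :=
  ∀ s t : ℝ, dist (c s) (c t) = |s - t|

/-- Two lines are parallel if their distance is sublinear in both directions. -/
def ParallelLines {X : Type*} [MetricSpace X] (c₀ c₁ : ℝ → X) : Prop :=
  Filter.Tendsto (fun t => dist (c₀ t) (c₁ t) / |t|) Filter.atTop (nhds 0) ∧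
  Filter.Tendsto (fun t => dist (c₀ t) (c₁ t) / |t|) Filter.atBot (nhds 0)

/-- `b` is the Busemann function of the ray `c`. -/
def IsBusemannOf {X : Type*} [MetricSpace X] (c : ℝ → X) (b : X → ℝ) : Prop :=
  ∀ x : X, Filter.Tendsto (fun t => dist x (c t) - t) Filter.atTop (nhds (b x))

open Asymptotics

theorem isLittleO_id_of_tendsto_div_abs {l : Filter ℝ} {g : ℝ → ℝ} (hl : ∀ᶠ x in l, x ≠ 0)
    (h : Tendsto (fun x => g x / |x|) l (𝓝 0)) : g =o[l] id := by
  refine isLittleO_norm_right.mp ((isLittleO_iff_tendsto' ?_).mpr ?_)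
  · exact hl.mono fun x hx h0 => absurd (norm_eq_zero.mp h0) hx
  · simpa only [Real.norm_eq_abs, id_eq] using h

theorem ConvexOn.of_tendsto {E ι : Type*} [AddCommMonoid E] [Module ℝ E] {s : Set E}
    {l : Filter ι} [l.NeBot] {F : ι → E → ℝ} {f : E → ℝ}
    (hF : ∀ᶠ i in l, ConvexOn ℝ s (F i)) (hlim : ∀ x ∈ s, Tendsto (fun i => F i x) l (𝓝 (f x))) :
    ConvexOn ℝ s f := by
  obtain ⟨i, hi⟩ := hF.exists
  refine ⟨hi.1, fun x hx y hy a b ha hb hab => ?_⟩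
  refine le_of_tendsto_of_tendsto (hlim _ (hi.1 hx hy ha hb hab))
    (((hlim x hx).const_mul a).add ((hlim y hy).const_mul b)) ?_
  filter_upwards [hF] with j hj
  exact hj.2 hx hy ha hb hab

theorem ConvexOn.antitone_of_le_of_isLittleO_atTop {f e : ℝ → ℝ} (hf : ConvexOn ℝ univ f)
    (hle : ∀ x, f x ≤ e x) (he : e =o[atTop] id) : Antitone f := by
  intro u v huv
  rcases huv.eq_or_lt with rfl | huv
  · exact le_rfl
  have hshift : (fun w : ℝ => w - v) ~[atTop] id :=
    IsEquivalent.refl.sub_isLittleO (isLittleO_const_id_atTop v)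
  have hlim : Tendsto (fun w => (e w - f v) / (w - v)) atTop (𝓝 0) :=
    ((he.sub (isLittleO_const_id_atTop (f v))).trans_isBigO
      hshift.isBigO_symm).tendsto_div_nhds_zero
  have hslope : (f v - f u) / (v - u) ≤ 0 := by
    refine ge_of_tendsto hlim ?_
    filter_upwards [eventually_gt_atTop v] with w hw
    calc (f v - f u) / (v - u) ≤ (f w - f v) / (w - v) :=
          hf.slope_mono_adjacent (mem_univ u) (mem_univ w) huv hw
      _ ≤ (e w - f v) / (w - v) :=
          div_le_div_of_nonneg_right (sub_le_sub_right (hle w) _) (by linarith)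
  rw [div_nonpos_iff] at hslope
  rcases hslope with ⟨-, h⟩ | ⟨h, -⟩ <;> linarith

theorem ConvexOn.eq_of_le_of_isLittleO {f e : ℝ → ℝ} (hf : ConvexOn ℝ univ f)
    (hle : ∀ x, f x ≤ e x) (htop : e =o[atTop] id) (hbot : e =o[atBot] id) (x y : ℝ) :
    f x = f y := by
  have hanti := hf.antitone_of_le_of_isLittleO_atTop hle htop
  have hmono : Antitone fun x => f (-x) := by
    refine ConvexOn.antitone_of_le_of_isLittleO_atTop (e := fun x => e (-x)) ?_ (fun x => hle _) ?_
    · refine ⟨convex_univ, fun x _ y _ a b ha hb hab => ?_⟩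
      simpa only [smul_eq_mul, mul_neg, ← neg_add] using
        hf.2 (mem_univ (-x)) (mem_univ (-y)) ha hb hab
    · exact isLittleO_neg_right.mp (hbot.comp_tendsto tendsto_neg_atTop_atBot)
  rcases le_total x y with h | h
  · exact le_antisymm (by simpa using hmono (neg_le_neg h)) (hanti h)
  · exact le_antisymm (hanti h) (by simpa using hmono (neg_le_neg h))

section Busemann

variable {X : Type*} [MetricSpace X] {c d : ℝ → X} {b bc bd bp bm : X → ℝ}

theorem IsGeodesicLine.dist_eq_sub (hc : IsGeodesicLine c) {s t : ℝ} (h : s ≤ t) :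
    dist (c s) (c t) = t - s := by
  rw [hc, abs_of_nonpos (sub_nonpos.2 h), neg_sub]

theorem IsGeodesicLine.comp_neg (hc : IsGeodesicLine c) : IsGeodesicLine fun t => c (-t) := by
  intro s t
  rw [hc, ← abs_neg, neg_sub_neg, neg_sub]

theorem IsGeodesicLine.antitone_dist_sub (hc : IsGeodesicLine c) (x : X) :
    Antitone fun t => dist x (c t) - t := by
  intro s t hst
  linarith [dist_triangle x (c s) (c t), hc.dist_eq_sub hst]

theorem IsGeodesicLine.exists_isBusemannOf (hc : IsGeodesicLine c) : ∃ b, IsBusemannOf c b := by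
  refine ⟨fun x => ⨅ t, dist x (c t) - t,
    fun x => tendsto_atTop_ciInf (hc.antitone_dist_sub x) ?_⟩
  refine ⟨-dist x (c 0), forall_mem_range.2 fun t => ?_⟩
  have h0t : dist (c 0) (c t) = |t| := by rw [hc, zero_sub, abs_neg]
  linarith [dist_triangle_left (c 0) (c t) x, le_abs_self t]

theorem IsBusemannOf.le_dist_sub (hb : IsBusemannOf c b) (hc : IsGeodesicLine c) (x : X) (t : ℝ) :
    b x ≤ dist x (c t) - t :=
  le_of_tendsto (hb x) ((eventually_ge_atTop t).mono fun _ hs => hc.antitone_dist_sub x hs)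

theorem IsBusemannOf.le_add_dist (hb : IsBusemannOf c b) (x y : X) : b x ≤ b y + dist x y :=
  le_of_tendsto_of_tendsto' (hb x) ((hb y).add_const (dist x y)) fun t => by
    linarith [dist_triangle x y (c t)]

theorem IsBusemannOf.apply_zero (hb : IsBusemannOf c b) (hc : IsGeodesicLine c) : b (c 0) = 0 := by
  refine tendsto_nhds_unique (hb (c 0)) (tendsto_const_nhds.congr' ?_)
  filter_upwards [eventually_ge_atTop 0] with t ht
  rw [hc.dist_eq_sub ht, sub_zero, sub_self]

theorem IsBusemannOf.comp_add_const (hb : IsBusemannOf c b) (s : ℝ) :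
    IsBusemannOf (fun t => c (t + s)) fun x => b x + s := fun x =>
  ((hb x).comp (tendsto_atTop_add_const_right atTop s tendsto_id)).add_const s |>.congr
    fun t => by simp only [Function.comp_apply, id_eq]; ring

theorem IsGeodesicLine.busemann_add_nonneg (hc : IsGeodesicLine c) (hbp : IsBusemannOf c bp)
    (hbm : IsBusemannOf (fun t => c (-t)) bm) (x : X) : 0 ≤ bp x + bm x := by
  refine ge_of_tendsto ((hbp x).add (hbm x)) ?_
  filter_upwards [eventually_ge_atTop 0] with t ht
  have h := hc.dist_eq_sub (neg_le_self ht)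
  linarith [dist_triangle_left (c (-t)) (c t) x]

theorem ParallelLines.symm (h : ParallelLines c d) : ParallelLines d c := by
  simpa only [ParallelLines, dist_comm] using h

theorem ParallelLines.comp_neg (h : ParallelLines c d) :
    ParallelLines (fun t => c (-t)) fun t => d (-t) := by
  constructor
  · simpa [Function.comp_def] using h.2.comp tendsto_neg_atTop_atBot
  · simpa [Function.comp_def] using h.1.comp tendsto_neg_atBot_atTop

theorem ParallelLines.isLittleO_atTop (h : ParallelLines c d) :
    (fun t => dist (c t) (d t)) =o[atTop] id :=
  isLittleO_id_of_tendsto_div_abs (eventually_ne_atTop 0) h.1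

theorem ParallelLines.isLittleO_atBot (h : ParallelLines c d) :
    (fun t => dist (c t) (d t)) =o[atBot] id :=
  isLittleO_id_of_tendsto_div_abs (eventually_ne_atBot 0) h.2

theorem Ptolemaic.convexOn_dist_comp (hX : Ptolemaic X) (hd : IsGeodesicLine d) (x : X) :
    ConvexOn ℝ univ fun u => dist (d u) x := by
  refine convexOn_iff_slope_mono_adjacent.mpr ⟨convex_univ, fun u v w _ _ huv hvw => ?_⟩
  have hpt := hX (d v) x (d u) (d w)
  rw [hd.dist_eq_sub (huv.trans hvw).le, dist_comm (d v) (d u), hd.dist_eq_sub huv.le,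
    hd.dist_eq_sub hvw.le, dist_comm x (d w), dist_comm x (d u)] at hpt
  rw [div_le_div_iff₀ (sub_pos.2 huv) (sub_pos.2 hvw)]
  linear_combination hpt

theorem IsBusemannOf.convexOn_comp (hb : IsBusemannOf c b) (hX : Ptolemaic X)
    (hd : IsGeodesicLine d) : ConvexOn ℝ univ fun u => b (d u) :=
  ConvexOn.of_tendsto (l := atTop) (F := fun t u => dist (d u) (c t) - t)
    (Eventually.of_forall fun t => (hX.convexOn_dist_comp hd (c t)).add_const (-t))
    fun u _ => hb (d u)

theorem IsBusemannOf.apply_parallel (hb : IsBusemannOf c b) (hX : Ptolemaic X)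
    (hc : IsGeodesicLine c) (hd : IsGeodesicLine d) (hcd : ParallelLines c d) (u : ℝ) :
    b (d u) = b (d 0) - u := by
  have hconv : ConvexOn ℝ univ fun u => b (d u) + u :=
    (hb.convexOn_comp hX hd).add (convexOn_id convex_univ)
  have hle : ∀ w, b (d w) + w ≤ dist (c w) (d w) := fun w => by
    linarith [hb.le_dist_sub hc (d w) w, dist_comm (c w) (d w)]
  linarith [hconv.eq_of_le_of_isLittleO hle hcd.isLittleO_atTop hcd.isLittleO_atBot u 0]

theorem IsBusemannOf.add_apply_nonpos (hbc : IsBusemannOf c bc) (hbd : IsBusemannOf d bd)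
    (hX : Ptolemaic X) (hc : IsGeodesicLine c) (hd : IsGeodesicLine d)
    (hcd : (fun t => dist (c t) (d t)) =o[atTop] id) : bc (d 0) + bd (c 0) ≤ 0 := by
  set a := bc (d 0)
  set a' := bd (c 0)
  have hlim : Tendsto (fun t => (dist (d 0) (c 0) * dist (c t) (d t) - a * a') / t) atTop (𝓝 0) :=
    ((hcd.const_mul_left _).sub (isLittleO_const_id_atTop _)).tendsto_div_nhds_zero
  refine ge_of_tendsto hlim ?_
  filter_upwards [eventually_gt_atTop 0, eventually_ge_atTop (-a), eventually_ge_atTop (-a')]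
    with t ht hta hta'
  have hca : t + a ≤ dist (d 0) (c t) := by linarith [hbc.le_dist_sub hc (d 0) t]
  have hda : t + a' ≤ dist (c 0) (d t) := by linarith [hbd.le_dist_sub hd (c 0) t]
  -- Ptolemy: `(t + a) (t + a') ≤ t ^ 2 + dist (d 0) (c 0) * dist (c t) (d t)`
  have hpt := hX (d 0) (c t) (d t) (c 0)
  rw [hd.dist_eq_sub ht.le, dist_comm (c t) (c 0), hc.dist_eq_sub ht.le,
    dist_comm (d t) (c 0)] at hpt
  rw [le_div_iff₀ ht]
  nlinarith [mul_le_mul hca hda (by linarith) dist_nonneg]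

theorem IsBusemannOf.le_add_of_apply_eq_sub (hbc : IsBusemannOf c bc)
    (hbd : IsBusemannOf d bd) (hslope : ∀ u, bc (d u) = bc (d 0) - u) (x : X) :
    bc x ≤ bd x + bc (d 0) :=
  le_of_tendsto_of_tendsto' tendsto_const_nhds ((hbd x).add_const _) fun t => by
    linarith [hbc.le_add_dist x (d t), hslope t]

theorem IsBusemannOf.eq_sub_of_parallel (hbc : IsBusemannOf c bc) (hbd : IsBusemannOf d bd)
    (hX : Ptolemaic X) (hc : IsGeodesicLine c) (hd : IsGeodesicLine d) (hcd : ParallelLines c d)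
    (x : X) : bd x = bc x - bc (d 0) := by
  have hle := hbc.le_add_of_apply_eq_sub hbd (hbc.apply_parallel hX hc hd hcd) x
  have hge := hbd.le_add_of_apply_eq_sub hbc (hbd.apply_parallel hX hd hc hcd.symm) x
  have hsum := hbc.add_apply_nonpos hbd hX hc hd hcd.isLittleO_atTop
  linarith

end Busemann

/-- **Parallel lines can be reparametrized so that they have the same forward
and backward Busemann functions.** -/
theorem parallel_lines_common_busemann_reparametrization
    (X : Type*) [MetricSpace X] (hPT : Ptolemaic X)
    (c₁ c₂ : ℝ → X) (h₁ : IsGeodesicLine c₁) (h₂ : IsGeodesicLine c₂)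
    (hpar : ParallelLines c₁ c₂)
    (b₁p b₁m : X → ℝ)
    (hb₁p : IsBusemannOf (fun t => c₁ t) b₁p)
    (hb₁m : IsBusemannOf (fun t => c₁ (-t)) b₁m) :
    ∃ s₀ : ℝ,
      IsBusemannOf (fun t => c₂ (t + s₀)) b₁p ∧
      IsBusemannOf (fun t => c₂ (-t + s₀)) b₁m := by
  obtain ⟨b₂p, hb₂p⟩ := h₂.exists_isBusemannOf
  obtain ⟨b₂m, hb₂m⟩ := h₂.comp_neg.exists_isBusemannOf
  have hp := hb₁p.eq_sub_of_parallel hb₂p hPT h₁ h₂ hpar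
  have hm := hb₁m.eq_sub_of_parallel hb₂m hPT h₁.comp_neg h₂.comp_neg hpar.comp_neg
  have h₁sum := h₁.busemann_add_nonneg hb₁p hb₁m (c₂ 0)
  have h₂sum := h₂.busemann_add_nonneg hb₂p hb₂m (c₁ 0)
  have h₁p := hb₁p.apply_zero h₁
  have h₁m := hb₁m.apply_zero h₁.comp_neg
  simp only [neg_zero] at hm h₁m
  have hshift : b₁m (c₂ 0) = -b₁p (c₂ 0) := by linarith [hp (c₁ 0), hm (c₁ 0)]
  refine ⟨b₁p (c₂ 0), ?_, ?_⟩
  · convert hb₂p.comp_add_const (b₁p (c₂ 0)) using 2 with x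
    rw [hp]; ring
  · convert hb₂m.comp_add_const (-b₁p (c₂ 0)) using 2 with x t
    · simp only [neg_add, neg_neg]
    · rw [hm, hshift]; ring
end

section
/- Let X be a geodesic ptolemaic metric space and let c : ℝ → X be a geodesic line such that X is foliated by parallels to c: for every point x ∈ X there exists a geodesic line c_x parallel to c with c_x(0) = x. Then the Busemann functions b⁺ and b⁻ of the forward and backward rays of c are affine, i.e. their composition with any geodesic γ : [0,1] → X is an affine function of the parameter. -/
open Metric Set Filter Topology

/-- A function is affine if its composition with any geodesic is an affine
function of the parameter. -/
def AffineOnGeodesics {X : Type*} [MetricSpace X] (f : X → ℝ) : Prop :=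
  ∀ γ : ℝ → X, ∀ l : ℝ, 0 ≤ l →
    (∀ s ∈ Set.Icc (0:ℝ) 1, ∀ t ∈ Set.Icc (0:ℝ) 1,
      dist (γ s) (γ t) = l * |s - t|) →
    ∃ α β : ℝ, ∀ t ∈ Set.Icc (0:ℝ) 1, f (γ t) = α * t + β


/-!
Along a line parallel to `c`, the Busemann function `b⁺` drops with unit speed: the Ptolemy
inequality with a far point `c T` makes Busemann functions convex, and the sublinear distance
to `c` forces the slope to be exactly `-1`. Symmetrically `b⁻` grows with unit speed. The
Ptolemy inequality for the quadrilateral `c_x 0, c_y t, c_y 0, c_x t` of two parallels then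
gives `b⁺ + b⁻` constant, and two convex functions with constant sum are both affine.
-/

open Asymptotics

section

variable {X : Type*} [MetricSpace X]

lemma nonpos_of_eventually_le_of_isLittleO {f : ℝ → ℝ} (hf : f =o[atTop] id) {a k : ℝ}
    (h : ∀ᶠ t in atTop, a * t + k ≤ f t) : a ≤ 0 := by
  by_contra! ha
  obtain ⟨t, hle, hsmall, ht0, htk⟩ :=
    (h.and ((hf.def (half_pos ha)).and ((eventually_gt_atTop 0).and
      (eventually_gt_atTop (-2 * k / a))))).exists
  rw [div_lt_iff₀ ha] at htk
  simp only [Real.norm_eq_abs, id, abs_of_pos ht0] at hsmall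
  linarith [le_abs_self (f t)]

namespace IsGeodesicLine

lemma dist_of_le {c : ℝ → X} (hc : IsGeodesicLine c) {s t : ℝ} (hst : s ≤ t) :
    dist (c s) (c t) = t - s := by
  rw [hc, abs_of_nonpos (by linarith), neg_sub]

lemma comp_neg_s13 {c : ℝ → X} (hc : IsGeodesicLine c) : IsGeodesicLine fun t => c (-t) := by
  intro s t
  rw [hc, ← abs_neg, neg_sub, sub_neg_eq_add, neg_add_eq_sub]

end IsGeodesicLine

namespace ParallelLines

variable {c₀ c₁ : ℝ → X}

lemma comp_neg_s13 (h : ParallelLines c₀ c₁) :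
    ParallelLines (fun t => c₀ (-t)) (fun t => c₁ (-t)) := by
  have e : (fun t => dist (c₀ (-t)) (c₁ (-t)) / |t|) =
      (fun t => dist (c₀ t) (c₁ t) / |t|) ∘ Neg.neg := by
    ext t; simp [abs_neg]
  rw [ParallelLines, e]
  exact ⟨h.2.comp tendsto_neg_atTop_atBot, h.1.comp tendsto_neg_atBot_atTop⟩

lemma isLittleO_atTop_s13 (h : ParallelLines c₀ c₁) :
    (fun t => dist (c₀ t) (c₁ t)) =o[atTop] id := by
  rw [← isLittleO_abs_right, isLittleO_iff_tendsto']
  · exact h.1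
  · filter_upwards [eventually_ne_atTop 0] with t ht h0
    exact absurd (abs_eq_zero.mp h0) ht

end ParallelLines

lemma isLittleO_dist_of_isLittleO {α : Type*} {l : Filter α} {g : α → ℝ} {c c₁ c₂ : α → X}
    (h₁ : (fun t => dist (c t) (c₁ t)) =o[l] g) (h₂ : (fun t => dist (c t) (c₂ t)) =o[l] g) :
    (fun t => dist (c₁ t) (c₂ t)) =o[l] g := by
  refine IsBigO.trans_isLittleO (isBigO_of_le _ fun t => ?_) (h₁.add h₂)
  simp only [Real.norm_eq_abs, abs_of_nonneg dist_nonneg,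
    abs_of_nonneg (add_nonneg dist_nonneg dist_nonneg)]
  exact dist_triangle_left _ _ _

def ConvexOnGeodesics (f : X → ℝ) : Prop :=
  ∀ γ : ℝ → X, ∀ l : ℝ, 0 ≤ l →
    (∀ s ∈ Icc (0:ℝ) 1, ∀ t ∈ Icc (0:ℝ) 1, dist (γ s) (γ t) = l * |s - t|) →
    ∀ t ∈ Icc (0:ℝ) 1, f (γ t) ≤ (1 - t) * f (γ 0) + t * f (γ 1)

lemma ConvexOnGeodesics.affineOnGeodesics_of_add_const {f g : X → ℝ}
    (hf : ConvexOnGeodesics f) (hg : ConvexOnGeodesics g)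
    (hfg : ∀ x y, f x + g x = f y + g y) : AffineOnGeodesics f := by
  intro γ l hl hγ
  refine ⟨f (γ 1) - f (γ 0), f (γ 0), fun t ht => ?_⟩
  have hft := hf γ l hl hγ t ht
  have hgt := hg γ l hl hγ t ht
  have h₀ := hfg (γ t) (γ 0)
  have h₁ := hfg (γ t) (γ 1)
  nlinarith [ht.1, ht.2]

namespace IsBusemannOf

variable {d : ℝ → X} {b : X → ℝ}

lemma sub_le_dist (hb : IsBusemannOf d b) (x y : X) : b x - b y ≤ dist x y := by
  refine le_of_tendsto ((hb x).sub (hb y)) (Eventually.of_forall fun t => ?_)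
  linarith [dist_triangle x y (d t)]

lemma apply_self (hb : IsBusemannOf d b) (hd : IsGeodesicLine d) (T : ℝ) : b (d T) = -T := by
  refine tendsto_nhds_unique (hb (d T)) (tendsto_const_nhds.congr' ?_)
  filter_upwards [eventually_ge_atTop T] with t ht
  rw [hd.dist_of_le ht]
  ring

lemma le_dist_sub_s13 (hb : IsBusemannOf d b) (hd : IsGeodesicLine d) (x : X) (T : ℝ) :
    b x ≤ dist (d T) x - T := by
  linarith [hb.sub_le_dist x (d T), hb.apply_self hd T, dist_comm x (d T)]

/-- The Ptolemy inequality for `p, r, d T, q` gives `(A + B) d(q, d T) ≤ B d(p, d T) + A d(r, d T)`;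
subtract `(A + B) T` and let `T → ∞`. -/
lemma mul_le_of_dist_eq_add (hPT : Ptolemaic X) (hb : IsBusemannOf d b) {p q r : X} {A B : ℝ}
    (hpq : dist p q = A) (hqr : dist q r = B) (hpr : dist p r = A + B) :
    (A + B) * b q ≤ B * b p + A * b r := by
  refine le_of_tendsto_of_tendsto' ((hb q).const_mul (A + B))
    (((hb p).const_mul B).add ((hb r).const_mul A)) fun T => ?_
  have hpt := hPT p r (d T) q
  rw [hpr, dist_comm (d T) q, dist_comm r q, hqr, hpq] at hpt
  linarith

lemma convexOnGeodesics (hPT : Ptolemaic X) (hb : IsBusemannOf d b) : ConvexOnGeodesics b := by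
  intro γ l hl hγ t ht
  have h0 : (0:ℝ) ∈ Icc (0:ℝ) 1 := left_mem_Icc.mpr zero_le_one
  have h1 : (1:ℝ) ∈ Icc (0:ℝ) 1 := right_mem_Icc.mpr zero_le_one
  rcases hl.eq_or_lt with rfl | hl
  · have hγ0 : ∀ s ∈ Icc (0:ℝ) 1, γ s = γ 0 := fun s hs => by
      simpa using hγ s hs 0 h0
    rw [hγ0 t ht, hγ0 1 h1]
    exact le_of_eq (by ring)
  · have key := hb.mul_le_of_dist_eq_add hPT (p := γ 0) (q := γ t) (r := γ 1)
      (A := l * t) (B := l * (1 - t))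
      (by rw [hγ 0 h0 t ht, abs_of_nonpos (by linarith [ht.1]), neg_sub, sub_zero])
      (by rw [hγ t ht 1 h1, abs_of_nonpos (by linarith [ht.2]), neg_sub])
      (by rw [hγ 0 h0 1 h1, zero_sub, abs_neg, abs_one]; ring)
    have : l * b (γ t) ≤ l * ((1 - t) * b (γ 0) + t * b (γ 1)) := by linarith
    exact le_of_mul_le_mul_left this hl

section ParallelLine

variable {ℓ : ℝ → X}

/-- Convexity on `ℓ s, ℓ t, ℓ T` together with `b (ℓ T) ≤ d(d T, ℓ T) - T` bounds the excess
slope by `O(d(d T, ℓ T) / T)`. -/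
lemma apply_le_of_isLittleO (hPT : Ptolemaic X) (hb : IsBusemannOf d b) (hd : IsGeodesicLine d)
    (hℓ : IsGeodesicLine ℓ) (hsub : (fun T => dist (d T) (ℓ T)) =o[atTop] id)
    {s t : ℝ} (hst : s ≤ t) : b (ℓ t) ≤ b (ℓ s) - (t - s) := by
  set e := b (ℓ t) - b (ℓ s) + (t - s)
  suffices e ≤ 0 by linarith
  refine nonpos_of_eventually_le_of_isLittleO (hsub.const_mul_left (t - s))
    (k := -e * s + (t - s) * (b (ℓ s) + s)) ?_
  filter_upwards [eventually_ge_atTop t] with T hT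
  have hconv := hb.mul_le_of_dist_eq_add hPT (hℓ.dist_of_le hst) (hℓ.dist_of_le hT)
    (by rw [hℓ.dist_of_le (hst.trans hT)]; ring)
  have hfar := mul_le_mul_of_nonneg_left (hb.le_dist_sub_s13 hd (ℓ T) T) (sub_nonneg.mpr hst)
  linarith

lemma apply_of_isLittleO (hPT : Ptolemaic X) (hb : IsBusemannOf d b) (hd : IsGeodesicLine d)
    (hℓ : IsGeodesicLine ℓ) (hsub : (fun T => dist (d T) (ℓ T)) =o[atTop] id) (t : ℝ) :
    b (ℓ t) = b (ℓ 0) - t := by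
  have hlip : ∀ s t, s ≤ t → b (ℓ s) - b (ℓ t) ≤ t - s := fun s t hst => by
    simpa only [hℓ.dist_of_le hst] using hb.sub_le_dist (ℓ s) (ℓ t)
  rcases le_total 0 t with ht | ht <;>
    linarith [hb.apply_le_of_isLittleO hPT hd hℓ hsub ht, hlip _ _ ht]

end ParallelLine

/-- Ptolemy for `ℓ₁ 0, ℓ₂ t, ℓ₂ 0, ℓ₁ t`, with the diagonals bounded below through the
`1`-Lipschitz `b` and `b'`, reads `(t + A)(t + B) ≤ d(ℓ₁ 0, ℓ₂ 0) d(ℓ₁ t, ℓ₂ t) + t²`. -/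
lemma add_le_add_of_isLittleO (hPT : Ptolemaic X) {d' : ℝ → X} {b' : X → ℝ}
    (hb : IsBusemannOf d b) (hb' : IsBusemannOf d' b') {ℓ₁ ℓ₂ : ℝ → X}
    (hℓ₁ : IsGeodesicLine ℓ₁) (hℓ₂ : IsGeodesicLine ℓ₂)
    (hb₂ : ∀ t, b (ℓ₂ t) = b (ℓ₂ 0) - t) (hb'₁ : ∀ t, b' (ℓ₁ t) = b' (ℓ₁ 0) + t)
    (hsub : (fun t => dist (ℓ₁ t) (ℓ₂ t)) =o[atTop] id) :
    b (ℓ₁ 0) + b' (ℓ₁ 0) ≤ b (ℓ₂ 0) + b' (ℓ₂ 0) := by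
  set A := b (ℓ₁ 0) - b (ℓ₂ 0)
  set B := b' (ℓ₁ 0) - b' (ℓ₂ 0)
  suffices A + B ≤ 0 by linarith
  refine nonpos_of_eventually_le_of_isLittleO (hsub.const_mul_left (dist (ℓ₁ 0) (ℓ₂ 0)))
    (k := A * B) ?_
  filter_upwards [eventually_ge_atTop (|A| + |B|)] with t ht
  have hA : 0 ≤ t + A := by linarith [neg_abs_le A, abs_nonneg B]
  have hB : 0 ≤ t + B := by linarith [neg_abs_le B, abs_nonneg A]
  have ht0 : 0 ≤ t := by linarith [abs_nonneg A, abs_nonneg B]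
  have hdiag₁ : t + A ≤ dist (ℓ₁ 0) (ℓ₂ t) := by
    linarith [hb.sub_le_dist (ℓ₁ 0) (ℓ₂ t), hb₂ t]
  have hdiag₂ : t + B ≤ dist (ℓ₂ 0) (ℓ₁ t) := by
    linarith [hb'.sub_le_dist (ℓ₁ t) (ℓ₂ 0), hb'₁ t, dist_comm (ℓ₂ 0) (ℓ₁ t)]
  have hpt := hPT (ℓ₁ 0) (ℓ₂ t) (ℓ₂ 0) (ℓ₁ t)
  rw [hℓ₁.dist_of_le ht0, dist_comm (ℓ₂ t) (ℓ₂ 0), hℓ₂.dist_of_le ht0, dist_comm (ℓ₂ t) (ℓ₁ t),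
    sub_zero] at hpt
  nlinarith [mul_le_mul hdiag₁ hdiag₂ hB dist_nonneg]

end IsBusemannOf

end

theorem busemann_affine_of_foliation_by_parallels_general
    (X : Type*) [MetricSpace X]
    (hPT : Ptolemaic X)
    (c : ℝ → X) (hc : IsGeodesicLine c)
    (hfol : ∀ x : X, ∃ cx : ℝ → X, IsGeodesicLine cx ∧
      ParallelLines c cx ∧ cx 0 = x)
    (bp bm : X → ℝ)
    (hbp : IsBusemannOf (fun t => c t) bp)
    (hbm : IsBusemannOf (fun t => c (-t)) bm) :
    AffineOnGeodesics bp ∧ AffineOnGeodesics bm := by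
  choose ℓ hℓ hpar hℓ0 using hfol
  have hp : ∀ z t, bp (ℓ z t) = bp (ℓ z 0) - t := fun z =>
    hbp.apply_of_isLittleO hPT hc (hℓ z) (hpar z).isLittleO_atTop_s13
  have hm : ∀ z t, bm (ℓ z t) = bm (ℓ z 0) + t := fun z t => by
    simpa using hbm.apply_of_isLittleO hPT hc.comp_neg_s13 (hℓ z).comp_neg_s13
      (hpar z).comp_neg_s13.isLittleO_atTop_s13 (-t)
  have hle : ∀ x y, bp x + bm x ≤ bp y + bm y := fun x y => by
    simpa only [hℓ0] using hbp.add_le_add_of_isLittleO hPT hbm (hℓ x) (hℓ y) (hp y) (hm x)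
      (isLittleO_dist_of_isLittleO (hpar x).isLittleO_atTop_s13 (hpar y).isLittleO_atTop_s13)
  have hconst : ∀ x y, bp x + bm x = bp y + bm y := fun x y => (hle x y).antisymm (hle y x)
  have hconvp := hbp.convexOnGeodesics hPT
  have hconvm := hbm.convexOnGeodesics hPT
  exact ⟨hconvp.affineOnGeodesics_of_add_const hconvm hconst,
    hconvm.affineOnGeodesics_of_add_const hconvp fun x y => by linarith [hconst x y]⟩

/-- **If a geodesic PT space is foliated by parallels to a line, then the
Busemann functions of that line are affine.** -/
theorem busemann_affine_of_foliation_by_parallels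
    (X : Type*) [MetricSpace X]
    (hPT : Ptolemaic X) (hgeo : GeodesicMetricSpace X)
    (c : ℝ → X) (hc : IsGeodesicLine c)
    (hfol : ∀ x : X, ∃ cx : ℝ → X, IsGeodesicLine cx ∧
      ParallelLines c cx ∧ cx 0 = x)
    (bp bm : X → ℝ)
    (hbp : IsBusemannOf (fun t => c t) bp)
    (hbm : IsBusemannOf (fun t => c (-t)) bm) :
    AffineOnGeodesics bp ∧ AffineOnGeodesics bm :=
  busemann_affine_of_foliation_by_parallels_general X hPT c hc hfol bp bm hbp hbm
end

section
/- Let X be a ptolemaic metric space and let c, c' : ℝ → X be two unit-speed geodesic lines that are mutually nearest along matching parameters: d(c(t), c'(t')) ≥ d(c(t), c'(t)) and d(c'(t), c(t')) ≥ d(c'(t), c(t)) for all t, t' ∈ ℝ. Then, writing μ(t) = d(c(t), c'(t)), one has max{μ(t), μ(t')}² ≤ μ(t)·μ(t') + (t − t')² for all t, t' ∈ ℝ. -/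
/-!
Both diagonals of the quadrilateral `c t, c' t, c' t', c t'` are at least `max (μ t) (μ t')`, by
mutual nearness, while Ptolemy's inequality bounds the product of the diagonals by the products of
opposite sides, `μ t * μ t' + |t - t'| * |t - t'|`.
-/

open Metric Set Filter Topology

section

variable {X : Type*} [MetricSpace X] {c c' : ℝ → X}

theorem Ptolemaic.dist_mul_dist_le_of_isGeodesicLine (hPT : Ptolemaic X)
    (hc : IsGeodesicLine c) (hc' : IsGeodesicLine c') (t t' : ℝ) :
    dist (c t) (c' t') * dist (c' t) (c t') ≤
      dist (c t) (c' t) * dist (c t') (c' t') + (t - t') ^ 2 := by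
  calc dist (c t) (c' t') * dist (c' t) (c t')
      ≤ dist (c t) (c' t) * dist (c' t') (c t') + dist (c t) (c t') * dist (c' t') (c' t) :=
        hPT (c t) (c' t') (c' t) (c t')
    _ = dist (c t) (c' t) * dist (c t') (c' t') + (t - t') ^ 2 := by
        rw [dist_comm (c' t') (c t'), hc t t', hc' t' t, abs_sub_comm t' t, abs_mul_abs_self, sq]

theorem max_dist_le_dist_of_nearest
    (hmin : ∀ t t' : ℝ, dist (c t) (c' t) ≤ dist (c t) (c' t'))
    (hmin' : ∀ t t' : ℝ, dist (c' t) (c t) ≤ dist (c' t) (c t')) (t t' : ℝ) :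
    max (dist (c t) (c' t)) (dist (c t') (c' t')) ≤ dist (c t) (c' t') := by
  refine max_le (hmin t t') ?_
  simpa only [dist_comm] using hmin' t' t

end

/-- **Key inequality for mutually nearest lines in a PT space:
`max{μ(t),μ(t')}² ≤ μ(t)·μ(t') + (t−t')²` where `μ(t) = d(c(t), c'(t))`.** -/
theorem mutually_nearest_lines_max_sq_le
    (X : Type*) [MetricSpace X] (hPT : Ptolemaic X)
    (c c' : ℝ → X) (hc : IsGeodesicLine c) (hc' : IsGeodesicLine c')
    (hmin : ∀ t t' : ℝ, dist (c t) (c' t) ≤ dist (c t) (c' t'))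
    (hmin' : ∀ t t' : ℝ, dist (c' t) (c t) ≤ dist (c' t) (c t')) :
    ∀ t t' : ℝ,
      (max (dist (c t) (c' t)) (dist (c t') (c' t'))) ^ 2 ≤
        dist (c t) (c' t) * dist (c t') (c' t') + (t - t') ^ 2 := by
  intro t t'
  have hdiag := max_dist_le_dist_of_nearest hmin hmin' t t'
  have hdiag' : max (dist (c t) (c' t)) (dist (c t') (c' t')) ≤ dist (c' t) (c t') := by
    simpa only [dist_comm (c' _)] using max_dist_le_dist_of_nearest hmin' hmin t t'
  calc (max (dist (c t) (c' t)) (dist (c t') (c' t'))) ^ 2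
      ≤ dist (c t) (c' t') * dist (c' t) (c t') := by
        rw [sq]; exact mul_le_mul hdiag hdiag' (le_max_of_le_left dist_nonneg) dist_nonneg
    _ ≤ dist (c t) (c' t) * dist (c t') (c' t') + (t - t') ^ 2 :=
        hPT.dist_mul_dist_le_of_isGeodesicLine hc hc' t t'
end
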